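/- Under the GT-SAGA setup, for every k ≥ 0: E[‖g^{k+1} − g^k‖²] ≤ 12λ²α²L²·E[‖y^{k+1} − Jy^{k+1}‖²] + 2·E[‖g^k − ∇f(x^k)‖²] + E[‖g^{k+1} − ∇f(x^{k+1})‖²] + 18L²·E[‖x^k − Jx^k‖²] + 6nα²L²·E[‖ḡ^k‖²]. -/

import Mathlib

open MeasureTheory ProbabilityTheory Finset Filter
open scoped ENNReal RealInnerProductSpace

noncomputable section

/-- The second largest singular value of a doubly stochastic matrix `w`, realized as the
operator norm of `w - (1/n) 𝟙ₙ 𝟙ₙᵀ` acting on `EuclideanSpace ℝ (Fin n)`. -/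
def secondSV {n : ℕ} (w : Matrix (Fin n) (Fin n) ℝ) : ℝ :=
  ‖LinearMap.toContinuousLinearMap
      (Matrix.toEuclideanLin (w - Matrix.of fun _ _ => (n : ℝ)⁻¹))‖

/-- The average `(1/n) ∑ᵢ vᵢ` of the blocks of a stacked vector `v ∈ ℝ^{np}`. -/
def blockAvg {n p : ℕ} (v : Fin n → EuclideanSpace ℝ (Fin p)) : EuclideanSpace ℝ (Fin p) :=
  (n : ℝ)⁻¹ • ∑ i, v i

/-- `‖v - J v‖²` for a stacked vector `v ∈ ℝ^{np}`, where `J = ((1/n) 𝟙ₙ 𝟙ₙᵀ) ⊗ Iₚ`. -/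
def consSq {n p : ℕ} (v : Fin n → EuclideanSpace ℝ (Fin p)) : ℝ :=
  ∑ i, ‖v i - blockAvg v‖ ^ 2

/-- `(W - J) v`, blockwise, where `W = w ⊗ Iₚ` and `J = ((1/n) 𝟙ₙ 𝟙ₙᵀ) ⊗ Iₚ`. -/
def WJapp {n p : ℕ} (w : Matrix (Fin n) (Fin n) ℝ) (v : Fin n → EuclideanSpace ℝ (Fin p)) :
    Fin n → EuclideanSpace ℝ (Fin p) :=
  fun i => (∑ r, w i r • v r) - blockAvg v

/-- The local batch function `fᵢ := (1/m) ∑ⱼ f_{i,j}`. -/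
def floc {n m p : ℕ} (f : Fin n → Fin m → EuclideanSpace ℝ (Fin p) → ℝ) (i : Fin n) :
    EuclideanSpace ℝ (Fin p) → ℝ :=
  fun u => (m : ℝ)⁻¹ * ∑ j, f i j u

/-- The global function `F := (1/n) ∑ᵢ fᵢ`. -/
def fglob {n m p : ℕ} (f : Fin n → Fin m → EuclideanSpace ℝ (Fin p) → ℝ) :
    EuclideanSpace ℝ (Fin p) → ℝ :=
  fun u => (n : ℝ)⁻¹ * ∑ i, floc f i u

/-- `F* := inf_x F(x)`. -/
def Fstar {n m p : ℕ} (f : Fin n → Fin m → EuclideanSpace ℝ (Fin p) → ℝ) : ℝ :=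
  ⨅ u, fglob f u

/-- `∇f̄(x) := (1/n) ∑ᵢ ∇fᵢ(xᵢ)`. -/
def gradfbar {n m p : ℕ} (f : Fin n → Fin m → EuclideanSpace ℝ (Fin p) → ℝ)
    (v : Fin n → EuclideanSpace ℝ (Fin p)) : EuclideanSpace ℝ (Fin p) :=
  (n : ℝ)⁻¹ • ∑ i, gradient (floc f i) (v i)

/-- The auxiliary quantity `t := (1/n) ∑ᵢ (1/m) ∑ⱼ ‖x̄ - z_{i,j}‖²`. -/
def tAux {n m p : ℕ} (xbar : EuclideanSpace ℝ (Fin p))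
    (z : Fin n → Fin m → EuclideanSpace ℝ (Fin p)) : ℝ :=
  (n : ℝ)⁻¹ * ∑ i, (m : ℝ)⁻¹ * ∑ j, ‖xbar - z i j‖ ^ 2

/-- The filtration `F^k := σ(τᵢᵗ, sᵢᵗ : i ∈ V, t ≤ k-1)`, with `F⁰` trivial. -/
def gtFilt {Ω : Type*} {n m : ℕ} (τ s : Fin n → ℕ → Ω → Fin m) (k : ℕ) :
    MeasurableSpace Ω :=
  ⨆ (i : Fin n) (t : ℕ) (_ : t < k),
    MeasurableSpace.comap (τ i t) ⊤ ⊔ MeasurableSpace.comap (s i t) ⊤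

/-!
Split `g^{k+1} - g^k = (g^{k+1} - ∇f(x^{k+1})) + (∇f(x^{k+1}) - g^k)`. The second summand is
`F^{k+1}`-measurable, while the first averages to zero over the sample `τ^{k+1}`, which is uniform
and independent of `F^{k+1}`; hence the cross term has zero mean and the expected squares add.
By `L`-smoothness the second summand is at most `2L²‖x^{k+1} - x^k‖² + 2‖g^k - ∇f(x^k)‖²`, and
`x^{k+1} - x^k = (W - J)x^k + (Jx^k - x^k) - α(W - J)y^{k+1} - αJy^{k+1}`, where
`‖(W - J)v‖ ≤ λ‖v - Jv‖` and gradient tracking gives `ȳ^{k+1} = ḡ^k`.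
-/

theorem sum_norm_sq_eq_sum_norm_sq_transpose {n p : ℕ} (v : Fin n → EuclideanSpace ℝ (Fin p)) :
    ∑ i, ‖v i‖ ^ 2 = ∑ c, ‖WithLp.toLp 2 (fun i => v i c)‖ ^ 2 := by
  simp only [EuclideanSpace.norm_sq_eq]
  exact Finset.sum_comm

theorem blockAvg_apply {n p : ℕ} (v : Fin n → EuclideanSpace ℝ (Fin p)) (c : Fin p) :
    blockAvg v c = (n : ℝ)⁻¹ * ∑ i, v i c := by
  simp [blockAvg, WithLp.ofLp_sum]

theorem WJapp_apply_apply {n p : ℕ} {w : Matrix (Fin n) (Fin n) ℝ} (hrow : ∀ i, ∑ r, w i r = 1)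
    (v : Fin n → EuclideanSpace ℝ (Fin p)) (i : Fin n) (c : Fin p) :
    WJapp w v i c = Matrix.toEuclideanLin (w - Matrix.of fun _ _ => (n : ℝ)⁻¹)
      (WithLp.toLp 2 fun r => v r c - blockAvg v c) i := by
  have hn : (n : ℝ) ≠ 0 := Nat.cast_ne_zero.mpr i.pos.ne'
  simp [WJapp, Matrix.mulVec, dotProduct, blockAvg_apply, mul_sub, Finset.sum_sub_distrib,
    ← Finset.sum_mul, ← Finset.mul_sum, hrow, WithLp.ofLp_sum, mul_inv_cancel_left₀ hn]

theorem sum_norm_WJapp_sq_le {n p : ℕ} {w : Matrix (Fin n) (Fin n) ℝ}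
    (hrow : ∀ i, ∑ r, w i r = 1) (v : Fin n → EuclideanSpace ℝ (Fin p)) :
    ∑ i, ‖WJapp w v i‖ ^ 2 ≤ secondSV w ^ 2 * consSq v := by
  set T := LinearMap.toContinuousLinearMap
    (Matrix.toEuclideanLin (w - Matrix.of fun _ _ => (n : ℝ)⁻¹))
  calc ∑ i, ‖WJapp w v i‖ ^ 2
      = ∑ c, ‖T (WithLp.toLp 2 fun r => v r c - blockAvg v c)‖ ^ 2 := by
        rw [sum_norm_sq_eq_sum_norm_sq_transpose]
        simp_rw [WJapp_apply_apply hrow]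
        rfl
    _ ≤ ∑ c, (‖T‖ * ‖WithLp.toLp 2 fun r => v r c - blockAvg v c‖) ^ 2 := by
        gcongr
        exact T.le_opNorm _
    _ = secondSV w ^ 2 * consSq v := by
        rw [consSq, sum_norm_sq_eq_sum_norm_sq_transpose, Finset.mul_sum]
        simp_rw [mul_pow]
        rfl

theorem blockAvg_mix {n p : ℕ} {w : Matrix (Fin n) (Fin n) ℝ} (hcol : ∀ r, ∑ i, w i r = 1)
    (v : Fin n → EuclideanSpace ℝ (Fin p)) :
    blockAvg (fun i => ∑ r, w i r • v r) = blockAvg v := by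
  simp only [blockAvg]
  rw [Finset.sum_comm]
  simp_rw [← Finset.sum_smul, hcol, one_smul]

theorem blockAvg_succ_eq_of_tracking {n p : ℕ} {w : Matrix (Fin n) (Fin n) ℝ}
    (hcol : ∀ r, ∑ i, w i r = 1) {y g : ℕ → Fin n → EuclideanSpace ℝ (Fin p)}
    (hy0 : ∀ i, y 0 i = 0)
    (hy : ∀ k i, y (k + 1) i =
      ∑ r, w i r • (y k r + g k r - (if k = 0 then 0 else g (k - 1) r)))
    (k : ℕ) : blockAvg (y (k + 1)) = blockAvg (g k) := by
  have hstep : ∀ k, blockAvg (y (k + 1))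
      = blockAvg (y k) + blockAvg (g k) - (if k = 0 then 0 else blockAvg (g (k - 1))) := by
    intro k
    rw [show y (k + 1) = _ from funext (hy k), blockAvg_mix hcol]
    split_ifs <;>
      simp [blockAvg, Finset.sum_add_distrib, Finset.sum_sub_distrib, smul_add, smul_sub]
  induction k with
  | zero => simpa [blockAvg, hy0] using hstep 0
  | succ k ih => rw [hstep, ih, if_neg k.succ_ne_zero, Nat.add_sub_cancel, add_sub_cancel_left]

-- Cauchy–Schwarz with the weights `1/6, 1/3, 1/6, 1/3`.
theorem norm_add_add_add_sq_le {E : Type*} [SeminormedAddCommGroup E] (a b c d : E) :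
    ‖a + b + c + d‖ ^ 2 ≤ 6 * ‖a‖ ^ 2 + 3 * ‖b‖ ^ 2 + 6 * ‖c‖ ^ 2 + 3 * ‖d‖ ^ 2 := by
  have h : ‖a + b + c + d‖ ^ 2 ≤ (‖a‖ + ‖b‖ + ‖c‖ + ‖d‖) ^ 2 := by
    gcongr
    exact norm_add₄_le
  nlinarith [sq_nonneg (‖a‖ - ‖c‖), sq_nonneg (‖b‖ - ‖d‖), sq_nonneg (2 * ‖a‖ - ‖b‖),
    sq_nonneg (2 * ‖a‖ - ‖d‖), sq_nonneg (2 * ‖c‖ - ‖b‖), sq_nonneg (2 * ‖c‖ - ‖d‖)]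

theorem sum_norm_mix_step_sub_sq_le {n p : ℕ} {w : Matrix (Fin n) (Fin n) ℝ}
    (hrow : ∀ i, ∑ r, w i r = 1) (hw : secondSV w ≤ 1) (α : ℝ)
    (u v u' : Fin n → EuclideanSpace ℝ (Fin p)) (hu' : ∀ i, u' i = ∑ r, w i r • (u r - α • v r)) :
    ∑ i, ‖u' i - u i‖ ^ 2 ≤ 9 * consSq u + 6 * α ^ 2 * secondSV w ^ 2 * consSq v
      + 3 * α ^ 2 * n * ‖blockAvg v‖ ^ 2 := by
  have hdecomp : ∀ i, u' i - u i
      = WJapp w u i + (blockAvg u - u i) + (-α) • WJapp w v i + (-α) • blockAvg v := by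
    intro i
    simp only [hu', WJapp, smul_sub, Finset.sum_sub_distrib, smul_comm (w i _) α, ← Finset.smul_sum,
      neg_smul]
    abel
  have hpt : ∀ i, ‖u' i - u i‖ ^ 2 ≤ 6 * ‖WJapp w u i‖ ^ 2 + 3 * ‖u i - blockAvg u‖ ^ 2
      + 6 * α ^ 2 * ‖WJapp w v i‖ ^ 2 + 3 * α ^ 2 * ‖blockAvg v‖ ^ 2 := by
    intro i
    have := norm_add_add_add_sq_le (WJapp w u i) (blockAvg u - u i) ((-α) • WJapp w v i)
      ((-α) • blockAvg v)
    simpa only [hdecomp, norm_smul, mul_pow, norm_neg, Real.norm_eq_abs, sq_abs, norm_sub_rev,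
      mul_assoc] using this
  have hsv : secondSV w ^ 2 ≤ 1 := pow_le_one₀ (norm_nonneg _) hw
  have hu := sum_norm_WJapp_sq_le hrow u
  have hv := sum_norm_WJapp_sq_le hrow v
  have hcu : 0 ≤ consSq u := Finset.sum_nonneg fun i _ => sq_nonneg _
  calc ∑ i, ‖u' i - u i‖ ^ 2
      ≤ ∑ i, (6 * ‖WJapp w u i‖ ^ 2 + 3 * ‖u i - blockAvg u‖ ^ 2
          + 6 * α ^ 2 * ‖WJapp w v i‖ ^ 2 + 3 * α ^ 2 * ‖blockAvg v‖ ^ 2) :=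
        Finset.sum_le_sum fun i _ => hpt i
    _ = 6 * ∑ i, ‖WJapp w u i‖ ^ 2 + 3 * consSq u + 6 * α ^ 2 * ∑ i, ‖WJapp w v i‖ ^ 2
          + 3 * α ^ 2 * n * ‖blockAvg v‖ ^ 2 := by
        simp only [Finset.sum_add_distrib, ← Finset.mul_sum, consSq, Finset.sum_const,
          Finset.card_univ, Fintype.card_fin, nsmul_eq_mul]
        ring
    _ ≤ _ := by nlinarith [mul_le_mul_of_nonneg_left hv (sq_nonneg α)]

theorem sum_norm_comp_sub_sq_le {ι E F : Type*} [Fintype ι] [SeminormedAddCommGroup E]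
    [SeminormedAddCommGroup F] {L : ℝ} (hL : 0 ≤ L) {G : ι → E → F}
    (hG : ∀ i, LipschitzWith L.toNNReal (G i)) (u u' : ι → E) (g : ι → F) :
    ∑ i, ‖G i (u' i) - g i‖ ^ 2
      ≤ 2 * L ^ 2 * ∑ i, ‖u' i - u i‖ ^ 2 + 2 * ∑ i, ‖g i - G i (u i)‖ ^ 2 := by
  rw [Finset.mul_sum, Finset.mul_sum, ← Finset.sum_add_distrib]
  gcongr with i
  have hlip : ‖G i (u' i) - G i (u i)‖ ≤ L * ‖u' i - u i‖ := by
    simpa [Real.coe_toNNReal _ hL] using (hG i).norm_sub_le (u' i) (u i)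
  calc ‖G i (u' i) - g i‖ ^ 2 ≤ (‖G i (u' i) - G i (u i)‖ + ‖g i - G i (u i)‖) ^ 2 := by
        gcongr
        rw [norm_sub_rev (g i)]
        exact norm_sub_le_norm_sub_add_norm_sub _ _ _
    _ ≤ 2 * (‖G i (u' i) - G i (u i)‖ ^ 2 + ‖g i - G i (u i)‖ ^ 2) := add_sq_le
    _ ≤ 2 * L ^ 2 * ‖u' i - u i‖ ^ 2 + 2 * ‖g i - G i (u i)‖ ^ 2 := by
        nlinarith [norm_nonneg (G i (u' i) - G i (u i))]

theorem sum_norm_comp_succ_sub_sq_le {n p : ℕ} {w : Matrix (Fin n) (Fin n) ℝ}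
    (hrow : ∀ i, ∑ r, w i r = 1) (hcol : ∀ r, ∑ i, w i r = 1) (hw : secondSV w ≤ 1)
    {L : ℝ} (hL : 0 ≤ L) {G : Fin n → EuclideanSpace ℝ (Fin p) → EuclideanSpace ℝ (Fin p)}
    (hG : ∀ i, LipschitzWith L.toNNReal (G i)) {α : ℝ}
    {x y g : ℕ → Fin n → EuclideanSpace ℝ (Fin p)} (hy0 : ∀ i, y 0 i = 0)
    (hy : ∀ k i, y (k + 1) i =
      ∑ r, w i r • (y k r + g k r - (if k = 0 then 0 else g (k - 1) r)))
    (hx : ∀ k i, x (k + 1) i = ∑ r, w i r • (x k r - α • y (k + 1) r)) (k : ℕ) :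
    ∑ i, ‖G i (x (k + 1) i) - g k i‖ ^ 2
      ≤ 18 * L ^ 2 * consSq (x k) + 12 * secondSV w ^ 2 * α ^ 2 * L ^ 2 * consSq (y (k + 1))
        + 6 * n * α ^ 2 * L ^ 2 * ‖blockAvg (g k)‖ ^ 2 + 2 * ∑ i, ‖g k i - G i (x k i)‖ ^ 2 := by
  have hstep := sum_norm_mix_step_sub_sq_le hrow hw α _ _ _ (hx k)
  rw [blockAvg_succ_eq_of_tracking hcol hy0 hy k] at hstep
  have hgrad := sum_norm_comp_sub_sq_le hL hG (x k) (x (k + 1)) (g k)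
  nlinarith [mul_le_mul_of_nonneg_left hstep (by positivity : (0 : ℝ) ≤ 2 * L ^ 2)]

theorem gradient_floc {n m p : ℕ} {f : Fin n → Fin m → EuclideanSpace ℝ (Fin p) → ℝ}
    (hdiff : ∀ i j, Differentiable ℝ (f i j)) (i : Fin n) (u : EuclideanSpace ℝ (Fin p)) :
    gradient (floc f i) u = (m : ℝ)⁻¹ • ∑ j, gradient (f i j) u := by
  refine HasGradientAt.gradient ?_
  rw [hasGradientAt_iff_hasFDerivAt, map_smul, map_sum]
  exact (HasFDerivAt.fun_sum fun j _ =>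
    hasGradientAt_iff_hasFDerivAt.mp (hdiff i j u).hasGradientAt).const_mul _

theorem lipschitzWith_average {E F : Type*} [PseudoMetricSpace E] [SeminormedAddCommGroup F]
    [NormedSpace ℝ F] {m : ℕ} {K : NNReal} {G : Fin m → E → F} (hG : ∀ j, LipschitzWith K (G j)) :
    LipschitzWith K fun u => (m : ℝ)⁻¹ • ∑ j, G j u := by
  refine LipschitzWith.of_dist_le_mul fun u v => ?_
  rw [dist_eq_norm, ← smul_sub, ← Finset.sum_sub_distrib, norm_smul, norm_inv, Real.norm_natCast]
  calc (m : ℝ)⁻¹ * ‖∑ j, (G j u - G j v)‖ ≤ (m : ℝ)⁻¹ * ∑ _j : Fin m, K * dist u v := by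
        gcongr
        refine (norm_sum_le _ _).trans (Finset.sum_le_sum fun j _ => ?_)
        rw [← dist_eq_norm]
        exact (hG j).dist_le_mul u v
    _ = ((m : ℝ)⁻¹ * m) * (K * dist u v) := by simp [mul_assoc]
    _ ≤ K * dist u v := by
        rcases Nat.eq_zero_or_pos m with rfl | hm
        · simpa using mul_nonneg K.2 dist_nonneg
        · rw [inv_mul_cancel₀ (by positivity), one_mul]

theorem lipschitzWith_gradient_floc {n m p : ℕ} {K : NNReal}
    {f : Fin n → Fin m → EuclideanSpace ℝ (Fin p) → ℝ} (hdiff : ∀ i j, Differentiable ℝ (f i j))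
    (hlip : ∀ i j, LipschitzWith K (gradient (f i j))) (i : Fin n) :
    LipschitzWith K (gradient (floc f i)) := by
  rw [funext (gradient_floc hdiff i)]
  exact lipschitzWith_average (hlip i)

/-- The SAGA estimator `g_i^k` of the paper: `G j = ∇f_{i,j}`, the gradient table is stored at
the points `z`, and `j = τ_i^k` is the sampled index. -/
def sagaEstimate {E : Type*} [AddCommGroup E] [Module ℝ E] {m : ℕ} (G : Fin m → E → E) (x : E)
    (z : Fin m → E) (j : Fin m) : E :=
  G j x - G j (z j) + (m : ℝ)⁻¹ • ∑ j', G j' (z j')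

theorem sum_sagaEstimate_sub_average {E : Type*} [AddCommGroup E] [Module ℝ E] {m : ℕ}
    (G : Fin m → E → E) (x : E) (z : Fin m → E) :
    ∑ j, (sagaEstimate G x z j - (m : ℝ)⁻¹ • ∑ j', G j' x) = 0 := by
  rcases Nat.eq_zero_or_pos m with rfl | hm
  · simp
  have hcancel : ∀ v : E, ∑ _j : Fin m, (m : ℝ)⁻¹ • v = v := fun v => by
    rw [Finset.sum_const, Finset.card_univ, Fintype.card_fin, ← Nat.cast_smul_eq_nsmul ℝ, smul_smul,
      mul_inv_cancel₀ (by positivity), one_smul]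
  simp only [sagaEstimate, Finset.sum_sub_distrib, Finset.sum_add_distrib, hcancel]
  abel

theorem LipschitzWith.memLp_comp {α E F : Type*} [MeasurableSpace α] {μ : Measure α}
    [IsFiniteMeasure μ] [NormedAddCommGroup E] [NormedAddCommGroup F] {K : NNReal} {G : E → F}
    (hG : LipschitzWith K G) {q : ℝ≥0∞} {X : α → E} (hX : MemLp X q μ) :
    MemLp (fun a => G (X a)) q μ := by
  have hG0 : LipschitzWith K fun u => G u - G 0 := fun u v => by
    simpa [edist_sub_right] using hG u v
  refine ((hG0.comp_memLp (sub_self _) hX).add (memLp_const (G 0))).ae_eq (ae_of_all _ fun a => ?_)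
  simp

theorem MeasureTheory.MemLp.integrable_inner {α E : Type*} [MeasurableSpace α] {μ : Measure α}
    [NormedAddCommGroup E] [InnerProductSpace ℝ E] {F G : α → E} (hF : MemLp F 2 μ)
    (hG : MemLp G 2 μ) : Integrable (fun a => ⟪F a, G a⟫) μ := by
  refine (L2.integrable_inner (𝕜 := ℝ) (hF.toLp F) (hG.toLp G)).congr ?_
  filter_upwards [hF.coeFn_toLp, hG.coeFn_toLp] with a hFa hGa
  rw [hFa, hGa]

theorem integrable_sum_norm_sq {α ι E : Type*} [MeasurableSpace α] {μ : Measure α} [Fintype ι]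
    [NormedAddCommGroup E] {F : ι → α → E} (hF : ∀ i, MemLp (F i) 2 μ) :
    Integrable (fun a => ∑ i, ‖F i a‖ ^ 2) μ :=
  integrable_finsetSum _ fun i _ => (hF i).norm.integrable_sq

theorem memLp_blockAvg {α : Type*} [MeasurableSpace α] {μ : Measure α} {n p : ℕ}
    {v : Fin n → α → EuclideanSpace ℝ (Fin p)} (hv : ∀ i, MemLp (v i) 2 μ) :
    MemLp (fun a => blockAvg fun i => v i a) 2 μ :=
  (memLp_finsetSum Finset.univ fun i _ => hv i).const_smul (n : ℝ)⁻¹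

theorem integrable_consSq {α : Type*} [MeasurableSpace α] {μ : Measure α} {n p : ℕ}
    {v : Fin n → α → EuclideanSpace ℝ (Fin p)} (hv : ∀ i, MemLp (v i) 2 μ) :
    Integrable (fun a => consSq fun i => v i a) μ :=
  integrable_sum_norm_sq fun i => (hv i).sub (memLp_blockAvg hv)

theorem integral_sum_norm_add_sq {α ι E : Type*} [MeasurableSpace α] {μ : Measure α} [Fintype ι]
    [NormedAddCommGroup E] [InnerProductSpace ℝ E] {A B : ι → α → E}
    (hA : ∀ i, MemLp (A i) 2 μ) (hB : ∀ i, MemLp (B i) 2 μ)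
    (horth : ∀ i, ∫ a, ⟪A i a, B i a⟫ ∂μ = 0) :
    ∫ a, ∑ i, ‖A i a + B i a‖ ^ 2 ∂μ = ∫ a, ∑ i, ‖A i a‖ ^ 2 ∂μ + ∫ a, ∑ i, ‖B i a‖ ^ 2 ∂μ := by
  have hAA := integrable_sum_norm_sq hA
  have hBB := integrable_sum_norm_sq hB
  have hAB : Integrable (fun a => ∑ i, 2 * ⟪A i a, B i a⟫) μ :=
    integrable_finsetSum _ fun i _ => ((hA i).integrable_inner (hB i)).const_mul 2
  have hcross : ∫ a, ∑ i, 2 * ⟪A i a, B i a⟫ ∂μ = 0 := by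
    rw [integral_finsetSum _ fun i _ => ((hA i).integrable_inner (hB i)).const_mul 2]
    simp [integral_const_mul, horth]
  simp_rw [norm_add_sq_real, Finset.sum_add_distrib]
  rw [integral_add (by fun_prop) hBB, integral_add hAA hAB, hcross, add_zero]

theorem integral_comp_of_indep_index {Ω ι : Type*} {𝒢 : MeasurableSpace Ω} [MeasurableSpace Ω]
    {P : Measure Ω} [Fintype ι] [MeasurableSpace ι] [MeasurableSingletonClass ι] {τ : Ω → ι}
    (hτ : Measurable τ)
    (hind : Indep 𝒢 (MeasurableSpace.comap τ ‹_›) P) {h : ι → Ω → ℝ}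
    (hh : ∀ j, Measurable[𝒢] (h j)) (hint : ∀ j, Integrable (h j) P) :
    ∫ ω, h (τ ω) ω ∂P = ∑ j, P.real (τ ⁻¹' {j}) * ∫ ω, h j ω ∂P := by
  have hA : ∀ j, MeasurableSet (τ ⁻¹' {j}) := fun j => hτ (measurableSet_singleton j)
  have hdecomp : ∀ ω, h (τ ω) ω = ∑ j, (τ ⁻¹' {j}).indicator 1 ω * h j ω := fun ω => by
    rw [Finset.sum_eq_single (τ ω) (fun j _ hj => by simp [Ne.symm hj])
      (by simp)]
    simp
  have hindep : ∀ j, IndepFun ((τ ⁻¹' {j}).indicator (1 : Ω → ℝ)) (h j) P := fun j =>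
    IndepFun.comp (indep_of_indep_of_le_right hind.symm (hh j).comap_le)
      (measurable_one.indicator (measurableSet_singleton j)) measurable_id
  have hint' : ∀ j, Integrable (fun ω => (τ ⁻¹' {j}).indicator 1 ω * h j ω) P := fun j => by
    simp_rw [← Set.indicator_mul_left, Pi.one_apply, one_mul]
    exact (hint j).indicator (hA j)
  rw [integral_congr_ae (ae_of_all _ hdecomp), integral_finsetSum _ fun j _ => hint' j]
  refine Finset.sum_congr rfl fun j _ => ?_
  rw [(hindep j).integral_fun_mul_eq_mul_integral
    ((measurable_one.indicator (hA j)).aestronglyMeasurable) (hint j).aestronglyMeasurable,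
    integral_indicator_one (hA j)]

theorem integral_inner_sagaEstimate_sub_average {Ω E : Type*} {𝒢 : MeasurableSpace Ω}
    [MeasurableSpace Ω] {P : Measure Ω} [IsFiniteMeasure P] [NormedAddCommGroup E]
    [InnerProductSpace ℝ E] [MeasurableSpace E] [BorelSpace E] [SecondCountableTopology E]
    {m : ℕ} {K : NNReal} {G : Fin m → E → E} (hG : ∀ j, LipschitzWith K (G j)) {τ : Ω → Fin m}
    (hτ : Measurable τ) (hunif : ∀ j, P {ω | τ ω = j} = (m : ℝ≥0∞)⁻¹)
    (hind : Indep 𝒢 (MeasurableSpace.comap τ ⊤) P) {X B : Ω → E} {Z : Fin m → Ω → E}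
    (hX : Measurable[𝒢] X) (hZ : ∀ j, Measurable[𝒢] (Z j)) (hB : Measurable[𝒢] B)
    (hXL2 : MemLp X 2 P) (hZL2 : ∀ j, MemLp (Z j) 2 P) (hBL2 : MemLp B 2 P) :
    ∫ ω, ⟪sagaEstimate G (X ω) (fun j => Z j ω) (τ ω) - (m : ℝ)⁻¹ • ∑ j, G j (X ω), B ω⟫ ∂P
      = 0 := by
  have hcont : ∀ j, Continuous (G j) := fun j => (hG j).continuous
  have hL2 : ∀ j, MemLp (fun ω => sagaEstimate G (X ω) (fun j => Z j ω) j
      - (m : ℝ)⁻¹ • ∑ j, G j (X ω)) 2 P := fun j =>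
    ((((hG j).memLp_comp hXL2).sub ((hG j).memLp_comp (hZL2 j))).add
      ((memLp_finsetSum Finset.univ fun j' _ => (hG j').memLp_comp (hZL2 j')).const_smul _)).sub
      ((memLp_finsetSum Finset.univ fun j' _ => (hG j').memLp_comp hXL2).const_smul _)
  have hint : ∀ j, Integrable (fun ω => ⟪sagaEstimate G (X ω) (fun j => Z j ω) j
      - (m : ℝ)⁻¹ • ∑ j, G j (X ω), B ω⟫) P := fun j => (hL2 j).integrable_inner hBL2
  rw [integral_comp_of_indep_index hτ hind (fun j => by unfold sagaEstimate; fun_prop) hint]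
  simp_rw [measureReal_def, Set.preimage, Set.mem_singleton_iff, hunif, ENNReal.toReal_inv,
    ENNReal.toReal_natCast, ← Finset.mul_sum, ← integral_finsetSum _ fun j _ => hint j,
    ← sum_inner, sum_sagaEstimate_sub_average, inner_zero_left, integral_zero, mul_zero]

section Filtration

variable {Ω : Type*} {n m : ℕ} (τ s : Fin n → ℕ → Ω → Fin m)

theorem gtFilt_mono : Monotone (gtFilt τ s) := fun _ _ hkl =>
  iSup_mono fun _ => biSup_mono fun _ ht => ht.trans_le hkl

theorem measurable_tau_gtFilt {t k : ℕ} (ht : t < k) (i : Fin n) :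
    Measurable[gtFilt τ s k] (τ i t) :=
  Measurable.of_comap_le <| le_iSup_of_le i <| le_iSup_of_le t <| le_iSup_of_le ht le_sup_left

theorem measurable_s_gtFilt {t k : ℕ} (ht : t < k) (i : Fin n) :
    Measurable[gtFilt τ s k] (s i t) :=
  Measurable.of_comap_le <| le_iSup_of_le i <| le_iSup_of_le t <| le_iSup_of_le ht le_sup_right

theorem indep_gtFilt_tau [MeasurableSpace Ω] {P : Measure Ω}
    (hτ : ∀ i k, Measurable (τ i k)) (hs : ∀ i k, Measurable (s i k))
    (hindep : iIndepFun (m := fun _ : Fin n × ℕ × Bool => (inferInstance : MeasurableSpace (Fin m)))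
      (fun q ω => if q.2.2 then τ q.1 q.2.1 ω else s q.1 q.2.1 ω) P)
    (i : Fin n) (t : ℕ) :
    Indep (gtFilt τ s t) (MeasurableSpace.comap (τ i t) ⊤) P := by
  have hT : ∀ q : Fin n × ℕ × Bool,
      Measurable fun ω => if q.2.2 then τ q.1 q.2.1 ω else s q.1 q.2.1 ω := by
    rintro ⟨i, t, _ | _⟩ <;> simp [hτ, hs]
  have hdisj : Disjoint {q : Fin n × ℕ × Bool | q.2.1 < t} {(i, t, true)} := by simp
  refine indep_of_indep_of_le
    (indep_iSup_of_disjoint (fun q => (hT q).comap_le) hindep.iIndep hdisj) ?_ ?_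
  · exact iSup_le fun i' => iSup₂_le fun t' ht' =>
      sup_le (le_iSup₂_of_le (i', t', true) ht' le_rfl) (le_iSup₂_of_le (i', t', false) ht' le_rfl)
  · exact le_iSup₂_of_le (i, t, true) rfl le_rfl

end Filtration

section Iterates

variable {Ω E : Type*} [NormedAddCommGroup E] [NormedSpace ℝ E] [MeasurableSpace E] [BorelSpace E]
  [SecondCountableTopology E] {n m : ℕ}

theorem measurable_sagaEstimate_comp {𝒜 : MeasurableSpace Ω} {G : Fin m → E → E}
    (hG : ∀ j, Continuous (G j)) {X : Ω → E} {Z : Fin m → Ω → E} {τ : Ω → Fin m}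
    (hX : Measurable[𝒜] X) (hZ : ∀ j, Measurable[𝒜] (Z j)) (hτ : Measurable[𝒜] τ) :
    Measurable[𝒜] fun ω => sagaEstimate G (X ω) (fun j => Z j ω) (τ ω) := by
  have hslice : ∀ j, Measurable[𝒜] fun ω => sagaEstimate G (X ω) (fun j => Z j ω) j := by
    intro j
    unfold sagaEstimate
    fun_prop
  exact (measurable_from_prod_countable_left (α := Ω)
    (f := fun q => sagaEstimate G (X q.1) (fun j => Z j q.1) q.2) hslice).comp
    (measurable_id.prodMk hτ)

theorem measurable_iterates {G : Fin n → Fin m → E → E} (hG : ∀ i j, Continuous (G i j))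
    {w : Matrix (Fin n) (Fin n) ℝ} {α : ℝ} {τ s : Fin n → ℕ → Ω → Fin m}
    {x y g : ℕ → Fin n → Ω → E} {z : ℕ → Fin n → Fin m → Ω → E} {x0 : E}
    (hx0 : ∀ i ω, x 0 i ω = x0) (hz0 : ∀ i j ω, z 0 i j ω = x0) (hy0 : ∀ i ω, y 0 i ω = 0)
    (hgdef : ∀ k i ω, g k i ω = sagaEstimate (G i) (x k i ω) (fun j => z k i j ω) (τ i k ω))
    (hydef : ∀ k i ω, y (k + 1) i ω =
      ∑ r, w i r • (y k r ω + g k r ω - (if k = 0 then 0 else g (k - 1) r ω)))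
    (hxdef : ∀ k i ω, x (k + 1) i ω = ∑ r, w i r • (x k r ω - α • y (k + 1) r ω))
    (hzdef : ∀ k i j ω, z (k + 1) i j ω = if j = s i k ω then x k i ω else z k i j ω) (t : ℕ) :
    (∀ i, Measurable[gtFilt τ s t] (x t i)) ∧ (∀ i j, Measurable[gtFilt τ s t] (z t i j)) ∧
      (∀ i, Measurable[gtFilt τ s t] (y t i)) ∧
      ∀ t' < t, ∀ i, Measurable[gtFilt τ s t] (g t' i) := by
  induction t with
  | zero =>
    refine ⟨fun i => ?_, fun i j => ?_, fun i => ?_, fun t' ht' => absurd ht' t'.not_lt_zero⟩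
    · rw [funext (hx0 i)]; exact measurable_const
    · rw [funext (hz0 i j)]; exact measurable_const
    · rw [funext (hy0 i)]; exact measurable_const
  | succ t ih =>
    obtain ⟨hx, hz, hy, hg⟩ := ih
    have hmono := gtFilt_mono τ s t.le_succ
    have hx' : ∀ i, Measurable[gtFilt τ s (t + 1)] (x t i) := fun i => (hx i).mono hmono le_rfl
    have hz' : ∀ i j, Measurable[gtFilt τ s (t + 1)] (z t i j) := fun i j =>
      (hz i j).mono hmono le_rfl
    have hg' : ∀ t' < t + 1, ∀ i, Measurable[gtFilt τ s (t + 1)] (g t' i) := by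
      intro t' ht' i
      rcases Nat.lt_succ_iff_lt_or_eq.mp ht' with ht' | rfl
      · exact (hg t' ht' i).mono hmono le_rfl
      · rw [funext (hgdef t' i)]
        exact measurable_sagaEstimate_comp (hG i) (hx' i) (hz' i)
          (measurable_tau_gtFilt τ s t'.lt_succ_self i)
    have hprev : ∀ r, Measurable[gtFilt τ s (t + 1)]
        fun ω => if t = 0 then 0 else g (t - 1) r ω := by
      intro r
      split_ifs with ht
      · exact measurable_const
      · exact hg' _ (by omega) r
    have hy' : ∀ i, Measurable[gtFilt τ s (t + 1)] (y (t + 1) i) := by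
      intro i
      have hyt := fun r => (hy r).mono hmono le_rfl
      have hgt := hg' t t.lt_succ_self
      rw [funext (hydef t i)]
      fun_prop
    refine ⟨fun i => ?_, fun i j => ?_, hy', hg'⟩
    · rw [funext (hxdef t i)]
      fun_prop
    · rw [funext (hzdef t i j)]
      exact Measurable.ite (measurableSet_eq_fun measurable_const
        (measurable_s_gtFilt τ s t.lt_succ_self i)) (hx' i) (hz' i j)

end Iterates

theorem integral_inner_estimator_error_eq_zero {Ω : Type*} [MeasurableSpace Ω] {P : Measure Ω}
    [IsFiniteMeasure P] {n m p : ℕ} {K : NNReal}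
    {f : Fin n → Fin m → EuclideanSpace ℝ (Fin p) → ℝ} (hdiff : ∀ i j, Differentiable ℝ (f i j))
    (hlip : ∀ i j, LipschitzWith K (gradient (f i j))) {w : Matrix (Fin n) (Fin n) ℝ} {α : ℝ}
    {τ s : Fin n → ℕ → Ω → Fin m}
    (hτmeas : ∀ i k, Measurable (τ i k)) (hsmeas : ∀ i k, Measurable (s i k))
    (hτunif : ∀ i k j, P {ω | τ i k ω = j} = (m : ℝ≥0∞)⁻¹)
    (hindep : iIndepFun (m := fun _ : Fin n × ℕ × Bool => (inferInstance : MeasurableSpace (Fin m)))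
      (fun q ω => if q.2.2 then τ q.1 q.2.1 ω else s q.1 q.2.1 ω) P)
    {x y g : ℕ → Fin n → Ω → EuclideanSpace ℝ (Fin p)}
    {z : ℕ → Fin n → Fin m → Ω → EuclideanSpace ℝ (Fin p)} {x0 : EuclideanSpace ℝ (Fin p)}
    (hx0 : ∀ i ω, x 0 i ω = x0) (hz0 : ∀ i j ω, z 0 i j ω = x0) (hy0 : ∀ i ω, y 0 i ω = 0)
    (hgdef : ∀ k i ω, g k i ω =
      sagaEstimate (fun j => gradient (f i j)) (x k i ω) (fun j => z k i j ω) (τ i k ω))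
    (hydef : ∀ k i ω, y (k + 1) i ω =
      ∑ r, w i r • (y k r ω + g k r ω - (if k = 0 then 0 else g (k - 1) r ω)))
    (hxdef : ∀ k i ω, x (k + 1) i ω = ∑ r, w i r • (x k r ω - α • y (k + 1) r ω))
    (hzdef : ∀ k i j ω, z (k + 1) i j ω = if j = s i k ω then x k i ω else z k i j ω)
    (hxL2 : ∀ k i, MemLp (x k i) 2 P) (hgL2 : ∀ k i, MemLp (g k i) 2 P)
    (hzL2 : ∀ k i j, MemLp (z k i j) 2 P) (k : ℕ) (i : Fin n) :
    ∫ ω, ⟪g (k + 1) i ω - gradient (floc f i) (x (k + 1) i ω),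
      gradient (floc f i) (x (k + 1) i ω) - g k i ω⟫ ∂P = 0 := by
  have hGlip := lipschitzWith_gradient_floc hdiff hlip i
  obtain ⟨hxF, hzF, -, hgF⟩ := measurable_iterates (fun i j => (hlip i j).continuous)
    hx0 hz0 hy0 hgdef hydef hxdef hzdef (k + 1)
  refine (integral_congr_ae (ae_of_all _ fun ω => ?_)).trans
    (integral_inner_sagaEstimate_sub_average (hlip i) (hτmeas i (k + 1)) (hτunif i (k + 1))
      (B := fun ω => gradient (floc f i) (x (k + 1) i ω) - g k i ω)
      (indep_gtFilt_tau τ s hτmeas hsmeas hindep i (k + 1)) (hxF i) (hzF i)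
      ((hGlip.continuous.measurable.comp (hxF i)).sub (hgF k k.lt_succ_self i))
      (hxL2 _ i) (hzL2 _ i) ((hGlip.memLp_comp (hxL2 (k + 1) i)).sub (hgL2 k i)))
  simp only [hgdef, gradient_floc hdiff]

theorem gtsaga_estimator_difference_bound_general
    {Ω : Type} [MeasurableSpace Ω] (P : Measure Ω) [IsProbabilityMeasure P]
    {n m p : ℕ}
    (L : ℝ) (hL : 0 < L)
    (f : Fin n → Fin m → EuclideanSpace ℝ (Fin p) → ℝ)
    (hdiff : ∀ i j, Differentiable ℝ (f i j))
    (hlip : ∀ i j, LipschitzWith L.toNNReal (gradient (f i j)))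
    (w : Matrix (Fin n) (Fin n) ℝ)
    (hrow : ∀ i, ∑ r, w i r = 1) (hcol : ∀ r, ∑ i, w i r = 1)
    (lam : ℝ) (hlam : lam = secondSV w) (hlam1 : lam < 1)
    (τ s : Fin n → ℕ → Ω → Fin m)
    (hτmeas : ∀ i k, Measurable (τ i k)) (hsmeas : ∀ i k, Measurable (s i k))
    (hτunif : ∀ i k j, P {ω | τ i k ω = j} = (m : ℝ≥0∞)⁻¹)
    (hindep : iIndepFun (m := fun _ : Fin n × ℕ × Bool => (inferInstance : MeasurableSpace (Fin m)))
      (fun q ω => if q.2.2 then τ q.1 q.2.1 ω else s q.1 q.2.1 ω) P)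
    (α : ℝ)
    (x y g : ℕ → Fin n → Ω → EuclideanSpace ℝ (Fin p))
    (z : ℕ → Fin n → Fin m → Ω → EuclideanSpace ℝ (Fin p))
    (x0 : EuclideanSpace ℝ (Fin p))
    (hx0 : ∀ i ω, x 0 i ω = x0)
    (hz0 : ∀ i j ω, z 0 i j ω = x0)
    (hy0 : ∀ i ω, y 0 i ω = 0)
    (hgdef : ∀ k i ω, g k i ω =
      gradient (f i (τ i k ω)) (x k i ω) - gradient (f i (τ i k ω)) (z k i (τ i k ω) ω)
        + (m : ℝ)⁻¹ • ∑ j, gradient (f i j) (z k i j ω))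
    (hydef : ∀ k i ω, y (k + 1) i ω =
      ∑ r, w i r • (y k r ω + g k r ω - (if k = 0 then 0 else g (k - 1) r ω)))
    (hxdef : ∀ k i ω, x (k + 1) i ω = ∑ r, w i r • (x k r ω - α • y (k + 1) r ω))
    (hzdef : ∀ k i j ω, z (k + 1) i j ω = if j = s i k ω then x k i ω else z k i j ω)
    (hxL2 : ∀ k i, MemLp (x k i) 2 P)
    (hyL2 : ∀ k i, MemLp (y k i) 2 P)
    (hgL2 : ∀ k i, MemLp (g k i) 2 P)
    (hzL2 : ∀ k i j, MemLp (z k i j) 2 P)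
    (k : ℕ) :
    (∫ ω, ∑ i, ‖g (k + 1) i ω - g k i ω‖ ^ 2 ∂P)
      ≤ 12 * lam ^ 2 * α ^ 2 * L ^ 2 * (∫ ω, consSq (fun i => y (k + 1) i ω) ∂P)
        + 2 * (∫ ω, ∑ i, ‖g k i ω - gradient (floc f i) (x k i ω)‖ ^ 2 ∂P)
        + (∫ ω, ∑ i, ‖g (k + 1) i ω - gradient (floc f i) (x (k + 1) i ω)‖ ^ 2 ∂P)
        + 18 * L ^ 2 * (∫ ω, consSq (fun i => x k i ω) ∂P)
        + 6 * n * α ^ 2 * L ^ 2 * (∫ ω, ‖blockAvg (fun i => g k i ω)‖ ^ 2 ∂P) := by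
  subst hlam
  have hGlip := lipschitzWith_gradient_floc hdiff hlip
  have hGL2 : ∀ t i, MemLp (fun ω => gradient (floc f i) (x t i ω)) 2 P := fun t i =>
    (hGlip i).memLp_comp (hxL2 t i)
  have hpyth := integral_sum_norm_add_sq
    (A := fun i ω => g (k + 1) i ω - gradient (floc f i) (x (k + 1) i ω))
    (B := fun i ω => gradient (floc f i) (x (k + 1) i ω) - g k i ω)
    (fun i => (hgL2 (k + 1) i).sub (hGL2 (k + 1) i)) (fun i => (hGL2 (k + 1) i).sub (hgL2 k i))
    (integral_inner_estimator_error_eq_zero hdiff hlip hτmeas hsmeas hτunif hindep hx0 hz0 hy0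
      hgdef hydef hxdef hzdef hxL2 hgL2 hzL2 k)
  simp only [sub_add_sub_cancel] at hpyth
  have hx := integrable_consSq fun i => hxL2 k i
  have hy := integrable_consSq fun i => hyL2 (k + 1) i
  have hg := (memLp_blockAvg fun i => hgL2 k i).norm.integrable_sq
  have hd := integrable_sum_norm_sq fun i => (hgL2 k i).sub (hGL2 k i)
  have hmono := integral_mono
    (integrable_sum_norm_sq (F := fun i ω => gradient (floc f i) (x (k + 1) i ω) - g k i ω)
      fun i => (hGL2 (k + 1) i).sub (hgL2 k i)) (by fun_prop) fun ω =>
    sum_norm_comp_succ_sub_sq_le hrow hcol hlam1.le hL.le hGlip (x := fun k i => x k i ω)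
      (y := fun k i => y k i ω) (g := fun k i => g k i ω) (fun i => hy0 i ω)
      (fun k i => hydef k i ω) (fun k i => hxdef k i ω) k
  rw [integral_add (by fun_prop) (by fun_prop), integral_add (by fun_prop) (by fun_prop),
    integral_add (by fun_prop) (by fun_prop), integral_const_mul, integral_const_mul,
    integral_const_mul, integral_const_mul] at hmono
  rw [hpyth]
  linarith

/-- GT-SAGA: bound on the expected squared difference of successive SAGA estimators. -/
theorem gtsaga_estimator_difference_bound
    {Ω : Type} [MeasurableSpace Ω] (P : Measure Ω) [IsProbabilityMeasure P]
    {n m p : ℕ} (hn : 1 ≤ n) (hm : 1 ≤ m)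
    (L : ℝ) (hL : 0 < L)
    (f : Fin n → Fin m → EuclideanSpace ℝ (Fin p) → ℝ)
    (hdiff : ∀ i j, Differentiable ℝ (f i j))
    (hlip : ∀ i j, LipschitzWith L.toNNReal (gradient (f i j)))
    (hFbdd : BddBelow (Set.range (fglob f)))
    (w : Matrix (Fin n) (Fin n) ℝ)
    (hrow : ∀ i, ∑ r, w i r = 1) (hcol : ∀ r, ∑ i, w i r = 1)
    (lam : ℝ) (hlam : lam = secondSV w) (hlam0 : 0 ≤ lam) (hlam1 : lam < 1)
    (τ s : Fin n → ℕ → Ω → Fin m)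
    (hτmeas : ∀ i k, Measurable (τ i k)) (hsmeas : ∀ i k, Measurable (s i k))
    (hτunif : ∀ i k j, P {ω | τ i k ω = j} = (m : ℝ≥0∞)⁻¹)
    (hsunif : ∀ i k j, P {ω | s i k ω = j} = (m : ℝ≥0∞)⁻¹)
    (hindep : iIndepFun (m := fun _ : Fin n × ℕ × Bool => (inferInstance : MeasurableSpace (Fin m)))
      (fun q ω => if q.2.2 then τ q.1 q.2.1 ω else s q.1 q.2.1 ω) P)
    (α : ℝ) (hα0 : 0 < α)
    (x y g : ℕ → Fin n → Ω → EuclideanSpace ℝ (Fin p))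
    (z : ℕ → Fin n → Fin m → Ω → EuclideanSpace ℝ (Fin p))
    (x0 : EuclideanSpace ℝ (Fin p))
    (hx0 : ∀ i ω, x 0 i ω = x0)
    (hz0 : ∀ i j ω, z 0 i j ω = x0)
    (hy0 : ∀ i ω, y 0 i ω = 0)
    (hgdef : ∀ k i ω, g k i ω =
      gradient (f i (τ i k ω)) (x k i ω) - gradient (f i (τ i k ω)) (z k i (τ i k ω) ω)
        + (m : ℝ)⁻¹ • ∑ j, gradient (f i j) (z k i j ω))
    (hydef : ∀ k i ω, y (k + 1) i ω =
      ∑ r, w i r • (y k r ω + g k r ω - (if k = 0 then 0 else g (k - 1) r ω)))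
    (hxdef : ∀ k i ω, x (k + 1) i ω = ∑ r, w i r • (x k r ω - α • y (k + 1) r ω))
    (hzdef : ∀ k i j ω, z (k + 1) i j ω = if j = s i k ω then x k i ω else z k i j ω)
    (hxL2 : ∀ k i, MemLp (x k i) 2 P)
    (hyL2 : ∀ k i, MemLp (y k i) 2 P)
    (hgL2 : ∀ k i, MemLp (g k i) 2 P)
    (hzL2 : ∀ k i j, MemLp (z k i j) 2 P)
    (k : ℕ) :
    (∫ ω, ∑ i, ‖g (k + 1) i ω - g k i ω‖ ^ 2 ∂P)
      ≤ 12 * lam ^ 2 * α ^ 2 * L ^ 2 * (∫ ω, consSq (fun i => y (k + 1) i ω) ∂P)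
        + 2 * (∫ ω, ∑ i, ‖g k i ω - gradient (floc f i) (x k i ω)‖ ^ 2 ∂P)
        + (∫ ω, ∑ i, ‖g (k + 1) i ω - gradient (floc f i) (x (k + 1) i ω)‖ ^ 2 ∂P)
        + 18 * L ^ 2 * (∫ ω, consSq (fun i => x k i ω) ∂P)
        + 6 * n * α ^ 2 * L ^ 2 * (∫ ω, ‖blockAvg (fun i => g k i ω)‖ ^ 2 ∂P) :=
  gtsaga_estimator_difference_bound_general P L hL f hdiff hlip w hrow hcol lam hlam hlam1 τ s
    hτmeas hsmeas hτunif hindep α x y g z x0 hx0 hz0 hy0 hgdef hydef hxdef hzdef hxL2 hyL2 hgL2 hzL2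
    k
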